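/- arXiv:2109.06878 — 4 statements merged into one kernel-verified Lean document; each statement's English description precedes it below -/
import Mathlib

section
/- For |q| < 1 and |w| < 1, one has ∑_{k=0}^∞ k·log(1 - w·q^k) = -∑_{l=1}^∞ (q^l/l) · w^l/(1 - q^l)^2. -/
open Complex

/-- For `|q| < 1` and `|w| < 1`,
`∑_{k=0}^∞ k·log(1 - w·q^k) = -∑_{l=1}^∞ (q^l/l) · w^l/(1 - q^l)^2`,
with the principal branch of the logarithm. -/
theorem sum_nat_mul_log_one_sub_geom (w q : ℂ) (hw : ‖w‖ < 1) (hq : ‖q‖ < 1) :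
    ∑' k : ℕ, (k : ℂ) * Complex.log (1 - w * q ^ k)
      = -∑' l : ℕ, (q ^ (l + 1) / ((l : ℂ) + 1)) * (w ^ (l + 1) / (1 - q ^ (l + 1)) ^ 2) := by
  set F : ℕ × ℕ → ℂ := fun p ↦ (p.1 : ℂ) * ((w * q ^ p.1) ^ p.2 / p.2) with hFdef
  have hwq : ∀ k : ℕ, ‖w * q ^ k‖ < 1 := by
    intro k
    calc ‖w * q ^ k‖ = ‖w‖ * ‖q‖ ^ k := by rw [norm_mul, norm_pow]
      _ ≤ ‖w‖ * 1 := by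
          exact mul_le_mul_of_nonneg_left (pow_le_one₀ (norm_nonneg q) hq.le) (norm_nonneg w)
      _ < 1 := by simpa using hw
  -- bound the norm of F
  have hbound : ∀ p : ℕ × ℕ, ‖F p‖ ≤ (p.1 * ‖q‖ ^ p.1) * ‖w‖ ^ p.2 := by
    rintro ⟨k, n⟩
    simp only [hFdef, norm_mul, Complex.norm_natCast, norm_div, norm_pow]
    cases n with
    | zero => simp; positivity
    | succ m =>
      have h1 : (‖w‖ * ‖q‖ ^ k) ^ (m + 1) / ((m + 1 : ℕ) : ℝ) ≤ ‖w‖ ^ (m + 1) * ‖q‖ ^ k := by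
        have hnorm1 : (1 : ℝ) ≤ ((m + 1 : ℕ) : ℝ) := by exact_mod_cast Nat.succ_le_succ m.zero_le
        calc (‖w‖ * ‖q‖ ^ k) ^ (m + 1) / ((m + 1 : ℕ) : ℝ)
            ≤ (‖w‖ * ‖q‖ ^ k) ^ (m + 1) / 1 :=
              div_le_div_of_nonneg_left (by positivity) one_pos hnorm1
          _ = ‖w‖ ^ (m + 1) * (‖q‖ ^ k) ^ (m + 1) := by rw [div_one, mul_pow]
          _ ≤ ‖w‖ ^ (m + 1) * ‖q‖ ^ k := by
              apply mul_le_mul_of_nonneg_left _ (by positivity)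
              rw [← pow_mul]
              exact pow_le_pow_of_le_one (norm_nonneg q) hq.le (Nat.le_mul_of_pos_right k m.succ_pos)
      calc (k : ℝ) * ((‖w‖ * ‖q‖ ^ k) ^ (m + 1) / ((m + 1 : ℕ) : ℝ))
          ≤ (k : ℝ) * (‖w‖ ^ (m + 1) * ‖q‖ ^ k) :=
            mul_le_mul_of_nonneg_left h1 (Nat.cast_nonneg k)
        _ = (k * ‖q‖ ^ k) * ‖w‖ ^ (m + 1) := by ring
  have hmaj : Summable (fun p : ℕ × ℕ ↦ (p.1 * ‖q‖ ^ p.1) * ‖w‖ ^ p.2) := by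
    have h1 : Summable (fun k : ℕ ↦ (k : ℝ) * ‖q‖ ^ k) := by
      simpa using (hasSum_coe_mul_geometric_of_norm_lt_one (r := ‖q‖) (by simpa)).summable
    have h2 : Summable (fun n : ℕ ↦ ‖w‖ ^ n) :=
      summable_geometric_of_lt_one (norm_nonneg w) hw
    exact h1.mul_of_nonneg h2 (fun k ↦ by positivity) (fun n ↦ by positivity)
  have hFnorm : Summable (fun p : ℕ × ℕ ↦ ‖F p‖) :=
    hmaj.of_nonneg_of_le (fun p ↦ norm_nonneg _) hbound
  have hFsum : Summable F := hFnorm.of_norm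
  -- each term of LHS as a sum over n
  have hrow : ∀ k : ℕ, HasSum (fun n ↦ F (k, n)) (-((k : ℂ) * Complex.log (1 - w * q ^ k))) := by
    intro k
    have := (hasSum_taylorSeries_neg_log (hwq k)).mul_left (k : ℂ)
    simpa [hFdef, mul_comm] using this
  have hLHS : ∑' k : ℕ, (k : ℂ) * Complex.log (1 - w * q ^ k) = -∑' k : ℕ, ∑' n : ℕ, F (k, n) := by
    rw [← tsum_neg]
    congr 1
    ext k
    rw [(hrow k).tsum_eq, neg_neg]
  rw [hLHS]
  congr 1
  -- swap the order of summation
  rw [show (∑' (k : ℕ) (n : ℕ), F (k, n)) = ∑' (n : ℕ) (k : ℕ), F (k, n) from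
    (Summable.tsum_comm (f := fun k n ↦ F (k, n)) hFsum).symm]
  -- compute the inner sums
  have hcol : ∀ n : ℕ, ∑' k : ℕ, F (k, n)
      = (if n = 0 then 0 else (q ^ n / (n : ℂ)) * (w ^ n / (1 - q ^ n) ^ 2)) := by
    intro n
    cases n with
    | zero => simp [hFdef]
    | succ m =>
      have hqn : ‖q ^ (m + 1)‖ < 1 := by
        rw [norm_pow]
        exact pow_lt_one₀ (norm_nonneg q) hq (Nat.succ_ne_zero m)
      have hgeom := (hasSum_coe_mul_geometric_of_norm_lt_one hqn).mul_left
        (w ^ (m + 1) / ((m : ℂ) + 1))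
      have heq : ∀ k : ℕ, F (k, m + 1)
          = (w ^ (m + 1) / ((m : ℂ) + 1)) * ((k : ℂ) * (q ^ (m + 1)) ^ k) := by
        intro k
        simp only [hFdef]
        rw [mul_pow, ← pow_mul, ← pow_mul, mul_comm k (m+1)]
        push_cast
        ring
      rw [tsum_congr heq, hgeom.tsum_eq]
      simp only [Nat.succ_ne_zero, if_false]
      push_cast
      ring
  rw [tsum_congr hcol]
  -- shift the index
  have hsumm : Summable (fun n : ℕ ↦
      (if n = 0 then (0:ℂ) else (q ^ n / (n : ℂ)) * (w ^ n / (1 - q ^ n) ^ 2))) := by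
    have := (hFsum.prod_symm.prod : Summable fun n : ℕ ↦ ∑' k : ℕ, F (k, n))
    exact this.congr hcol
  rw [Summable.tsum_eq_zero_add hsumm]
  simp
end

section
/- Let f₁(z) = ∑ aₙ zⁿ and f₂(z) = ∑ bₙ zⁿ be power series with radii of convergence r₁ > 0 and r₂ > 0. Then the Hadamard product (f₁ ⊛ f₂)(z) = ∑ aₙ bₙ zⁿ converges for |z| < r₁r₂, and for any ρ ∈ (0, r₁) and |z| < ρ·r₂ it equals (1/2πi) ∮_{|s|=ρ} (ds/s) f₁(s) f₂(z/s). -/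
/-!
Choose `ρ < r₁` with `|z| < ρ r₂`. Then `aₙbₙzⁿ = (aₙρⁿ)(bₙ(z/ρ)ⁿ)` is an absolutely summable
sequence times a null sequence, which gives convergence. On `|s| = ρ` the integrand
`f₁(s) f₂(z/s) / s` is the double series `∑ aₙ bₘ zᵐ s^(n-m-1)`, dominated by the convergent
`∑ |aₙ|ρⁿ |bₘ|(|z|/ρ)ᵐ / ρ`; integrating term by term, only the diagonal `n = m` survives, each
term contributing `2πi aₙbₙzⁿ`.
-/

open Complex Metric

theorem hasSum_circleIntegral_of_norm_le {ι E : Type*} [Countable ι] [NormedAddCommGroup E]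
    [NormedSpace ℂ E] [CompleteSpace E] {f : ι → ℂ → E} {c : ℂ} {R : ℝ} {u : ι → ℝ}
    (hf : ∀ i, CircleIntegrable (f i) c R) (hfu : ∀ i, ∀ z ∈ sphere c |R|, ‖f i z‖ ≤ u i)
    (hu : Summable u) :
    HasSum (fun i => ∮ z in C(c, R), f i z) (∮ z in C(c, R), ∑' i, f i z) := by
  have hsum (θ : ℝ) : Summable fun i => f i (circleMap c R θ) :=
    .of_norm_bounded hu fun i => hfu i _ (circleMap_mem_sphere' c R θ)
  refine intervalIntegral.hasSum_integral_of_dominated_convergence (fun i _ => |R| * u i)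
    (fun i => (hf i).out.def'.1) (fun i => .of_forall fun θ _ => ?_)
    (.of_forall fun _ _ => hu.mul_left _) intervalIntegrable_const
    (.of_forall fun θ _ => (hsum θ).hasSum.const_smul _)
  rw [deriv_circleMap, norm_smul]
  simp only [norm_mul, norm_circleMap_zero, norm_I, mul_one]
  exact mul_le_mul_of_nonneg_left (hfu i _ (circleMap_mem_sphere' c R θ)) (abs_nonneg R)

theorem circleIntegral_sub_zpow (c : ℂ) {R : ℝ} (hR : R ≠ 0) (k : ℤ) :
    (∮ z in C(c, R), (z - c) ^ k) = if k = -1 then 2 * Real.pi * I else 0 := by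
  split_ifs with hk
  · simp [hk, hR]
  · exact circleIntegral.integral_sub_zpow_of_ne hk c c R

theorem circleIntegral_pow_mul_div_pow_div {R : ℝ} (hR : 0 < R) (n m : ℕ) (w : ℂ) :
    (∮ s in C(0, R), s ^ n * (w / s) ^ m / s) = if n = m then 2 * Real.pi * I * w ^ n else 0 := by
  have h_eq : Set.EqOn (fun s => s ^ n * (w / s) ^ m / s)
      (fun s => w ^ m * (s - 0) ^ ((n : ℤ) - m - 1)) (sphere 0 R) := by
    intro s hs
    have hs0 : s ≠ 0 := ne_of_mem_sphere hs hR.ne'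
    simp only [sub_zero, zpow_sub₀ hs0, zpow_natCast, zpow_one, div_pow]
    field_simp
  rw [circleIntegral.integral_congr hR.le h_eq, circleIntegral.integral_const_mul,
    circleIntegral_sub_zpow 0 hR.ne']
  by_cases hnm : n = m
  · subst hnm
    simp only [sub_self, zero_sub, if_true]
    ring
  · rw [if_neg (by omega), if_neg hnm, mul_zero]

theorem summable_norm_mul_pow_of_norm_lt {a : ℕ → ℂ} {r : ℝ}
    (ha : ∀ z : ℂ, ‖z‖ < r → Summable (fun n => a n * z ^ n)) {w : ℂ} (hw : ‖w‖ < r) :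
    Summable (fun n => ‖a n * w ^ n‖) := by
  obtain ⟨s, hws, hsr⟩ := exists_between hw
  have hs : 0 < s := (norm_nonneg w).trans_lt hws
  have h_tendsto := (ha s (by rwa [Complex.norm_of_nonneg hs.le])).tendsto_cofinite_zero.norm
  have h_geom : Summable fun n => ‖(‖w‖ / s) ^ n‖ := by
    refine summable_norm_geometric_of_norm_lt_one ?_
    rw [Real.norm_of_nonneg (by positivity)]
    exact (div_lt_one hs).2 hws
  refine (h_geom.mul_tendsto_const h_tendsto).congr fun n => ?_
  simp only [norm_mul, norm_pow, Complex.norm_of_nonneg hs.le, div_pow]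
  field_simp

theorem norm_div_lt_of_lt_mul {z s : ℂ} {ρ r : ℝ} (hs : ‖s‖ = ρ) (hρ : 0 < ρ)
    (hz : ‖z‖ < ρ * r) : ‖z / s‖ < r := by
  rwa [norm_div, hs, div_lt_iff₀' hρ]

theorem summable_mul_mul_pow {a b : ℕ → ℂ} {r₁ r₂ ρ : ℝ} {z : ℂ}
    (ha : ∀ z : ℂ, ‖z‖ < r₁ → Summable (fun n => a n * z ^ n))
    (hb : ∀ z : ℂ, ‖z‖ < r₂ → Summable (fun n => b n * z ^ n))
    (hρ : ρ ∈ Set.Ioo 0 r₁) (hz : ‖z‖ < ρ * r₂) :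
    Summable (fun n => a n * b n * z ^ n) := by
  have hρ_norm : ‖(ρ : ℂ)‖ = ρ := Complex.norm_of_nonneg hρ.1.le
  have hρ0 : (ρ : ℂ) ≠ 0 := Complex.ofReal_ne_zero.2 hρ.1.ne'
  refine ((summable_norm_mul_pow_of_norm_lt ha (hρ_norm ▸ hρ.2)).mul_tendsto_const
    (hb _ (norm_div_lt_of_lt_mul hρ_norm hρ.1 hz)).tendsto_cofinite_zero).congr fun n => ?_
  rw [div_pow]
  field_simp

section HadamardTerm

variable (a b : ℕ → ℂ) (z : ℂ)

noncomputable def hadamardTerm (p : ℕ × ℕ) (s : ℂ) : ℂ :=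
  a p.1 * s ^ p.1 * (b p.2 * (z / s) ^ p.2) / s

variable {a b z}

theorem norm_hadamardTerm (p : ℕ × ℕ) (s : ℂ) :
    ‖hadamardTerm a b z p s‖ = ‖a p.1 * s ^ p.1‖ * ‖b p.2 * (z / s) ^ p.2‖ / ‖s‖ := by
  simp only [hadamardTerm, norm_div, norm_mul]

theorem summable_norm_hadamardTerm {s : ℂ} (ha : Summable fun n => ‖a n * s ^ n‖)
    (hb : Summable fun n => ‖b n * (z / s) ^ n‖) :
    Summable fun p => ‖hadamardTerm a b z p s‖ := by
  simp only [norm_hadamardTerm]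
  exact (ha.mul_of_nonneg hb (fun _ => norm_nonneg _) (fun _ => norm_nonneg _)).div_const _

theorem tsum_hadamardTerm {s : ℂ} (ha : Summable fun n => ‖a n * s ^ n‖)
    (hb : Summable fun n => ‖b n * (z / s) ^ n‖) :
    ∑' p, hadamardTerm a b z p s = (∑' n, a n * s ^ n) * (∑' n, b n * (z / s) ^ n) / s := by
  simp only [hadamardTerm, tsum_mul_tsum_of_summable_norm ha hb, tsum_div_const]

theorem circleIntegral_hadamardTerm {R : ℝ} (hR : 0 < R) (p : ℕ × ℕ) :
    (∮ s in C(0, R), hadamardTerm a b z p s)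
      = if p.1 = p.2 then 2 * Real.pi * I * (a p.1 * b p.1 * z ^ p.1) else 0 := by
  have h_factor : hadamardTerm a b z p = fun s => a p.1 * b p.2 * (s ^ p.1 * (z / s) ^ p.2 / s) := by
    ext s
    simp only [hadamardTerm]
    ring
  rw [h_factor, circleIntegral.integral_const_mul, circleIntegral_pow_mul_div_pow_div hR]
  split_ifs with h
  · rw [← h]
    ring
  · rw [mul_zero]

theorem hasSum_circleIntegral_hadamardTerm {R : ℝ} (hR : 0 < R)
    (ha : Summable fun n => ‖a n * (R : ℂ) ^ n‖) (hb : Summable fun n => ‖b n * (z / R) ^ n‖) :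
    HasSum (fun n => 2 * Real.pi * I * (a n * b n * z ^ n))
      (∮ s in C(0, R), ∑' p, hadamardTerm a b z p s) := by
  have h_int (p : ℕ × ℕ) : CircleIntegrable (hadamardTerm a b z p) 0 R := by
    refine ContinuousOn.circleIntegrable hR.le fun s hs => ?_
    have hs0 : s ≠ 0 := ne_of_mem_sphere hs hR.ne'
    unfold hadamardTerm
    fun_prop (disch := exact hs0)
  have h_le (p : ℕ × ℕ) (s : ℂ) (hs : s ∈ sphere 0 |R|) :
      ‖hadamardTerm a b z p s‖ ≤ ‖hadamardTerm a b z p R‖ := by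
    rw [mem_sphere_zero_iff_norm, abs_of_pos hR, ← Complex.norm_of_nonneg hR.le] at hs
    simp only [norm_hadamardTerm, norm_mul, norm_pow, norm_div, hs, le_refl]
  have h_sum := hasSum_circleIntegral_of_norm_le h_int h_le (summable_norm_hadamardTerm ha hb)
  have h_off_diag : ∀ p ∉ Set.range fun n : ℕ => (n, n),
      (∮ s in C(0, R), hadamardTerm a b z p s) = 0 := by
    rintro ⟨n, m⟩ hp
    rw [circleIntegral_hadamardTerm hR, if_neg]
    rintro (rfl : n = m)
    exact hp ⟨n, rfl⟩
  have h_diag_inj : Function.Injective fun n : ℕ => (n, n) := fun _ _ h => congrArg Prod.fst h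
  simpa only [Function.comp_def, circleIntegral_hadamardTerm hR, if_true]
    using (h_diag_inj.hasSum_iff h_off_diag).2 h_sum

end HadamardTerm

theorem circleIntegral_tsum_mul_tsum_div {a b : ℕ → ℂ} {r₁ r₂ ρ : ℝ} {z : ℂ}
    (ha : ∀ z : ℂ, ‖z‖ < r₁ → Summable (fun n => a n * z ^ n))
    (hb : ∀ z : ℂ, ‖z‖ < r₂ → Summable (fun n => b n * z ^ n))
    (hρ : ρ ∈ Set.Ioo 0 r₁) (hz : ‖z‖ < ρ * r₂) :
    (∮ s in C(0, ρ), (∑' n, a n * s ^ n) * (∑' n, b n * (z / s) ^ n) / s)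
      = 2 * Real.pi * I * ∑' n, a n * b n * z ^ n := by
  obtain ⟨hρ0, hρr⟩ := hρ
  have h_summable {s : ℂ} (hs : ‖s‖ = ρ) :
      (Summable fun n => ‖a n * s ^ n‖) ∧ Summable fun n => ‖b n * (z / s) ^ n‖ :=
    ⟨summable_norm_mul_pow_of_norm_lt ha (hs ▸ hρr),
      summable_norm_mul_pow_of_norm_lt hb (norm_div_lt_of_lt_mul hs hρ0 hz)⟩
  have h_integrand : Set.EqOn (fun s => ∑' p, hadamardTerm a b z p s)
      (fun s => (∑' n, a n * s ^ n) * (∑' n, b n * (z / s) ^ n) / s) (sphere 0 ρ) :=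
    fun s hs => tsum_hadamardTerm (h_summable (mem_sphere_zero_iff_norm.1 hs)).1
      (h_summable (mem_sphere_zero_iff_norm.1 hs)).2
  obtain ⟨hA, hB⟩ := h_summable (Complex.norm_of_nonneg hρ0.le)
  rw [← circleIntegral.integral_congr hρ0.le h_integrand,
    ← (hasSum_circleIntegral_hadamardTerm hρ0 hA hB).tsum_eq, tsum_mul_left]

theorem hadamard_product_general (a b : ℕ → ℂ) (r₁ r₂ : ℝ) (hr₂ : 0 < r₂)
    (ha : ∀ z : ℂ, ‖z‖ < r₁ → Summable (fun n => a n * z ^ n))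
    (hb : ∀ z : ℂ, ‖z‖ < r₂ → Summable (fun n => b n * z ^ n)) :
    (∀ z : ℂ, ‖z‖ < r₁ * r₂ → Summable (fun n => a n * b n * z ^ n)) ∧
    (∀ ρ : ℝ, ρ ∈ Set.Ioo 0 r₁ → ∀ z : ℂ, ‖z‖ < ρ * r₂ →
      ∑' n : ℕ, a n * b n * z ^ n
        = (1 / (2 * Real.pi * I)) *
            ∮ s in C(0, ρ), (∑' n : ℕ, a n * s ^ n) * (∑' n : ℕ, b n * (z / s) ^ n) / s) := by
  refine ⟨fun z hz => ?_, fun ρ hρ z hz => ?_⟩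
  · obtain ⟨ρ, hzρ, hρr⟩ := exists_between ((div_lt_iff₀ hr₂).2 hz)
    have hρ0 : 0 < ρ := (div_nonneg (norm_nonneg z) hr₂.le).trans_lt hzρ
    exact summable_mul_mul_pow ha hb ⟨hρ0, hρr⟩ ((div_lt_iff₀ hr₂).1 hzρ)
  · rw [circleIntegral_tsum_mul_tsum_div ha hb hρ hz]
    field_simp

/-- Hadamard product lemma: if `f₁(z) = ∑ aₙ zⁿ` and `f₂(z) = ∑ bₙ zⁿ` have radii of
convergence `r₁ > 0` and `r₂ > 0`, then `(f₁ ⊛ f₂)(z) = ∑ aₙbₙzⁿ` converges for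
`|z| < r₁r₂`, and for `ρ ∈ (0, r₁)` and `|z| < ρ·r₂` it equals
`(1/2πi) ∮_{|s|=ρ} (ds/s) f₁(s) f₂(z/s)`. -/
theorem hadamard_product (a b : ℕ → ℂ) (r₁ r₂ : ℝ) (hr₁ : 0 < r₁) (hr₂ : 0 < r₂)
    (ha : ∀ z : ℂ, ‖z‖ < r₁ → Summable (fun n => a n * z ^ n))
    (hb : ∀ z : ℂ, ‖z‖ < r₂ → Summable (fun n => b n * z ^ n)) :
    (∀ z : ℂ, ‖z‖ < r₁ * r₂ → Summable (fun n => a n * b n * z ^ n)) ∧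
    (∀ ρ : ℝ, ρ ∈ Set.Ioo 0 r₁ → ∀ z : ℂ, ‖z‖ < ρ * r₂ →
      ∑' n : ℕ, a n * b n * z ^ n
        = (1 / (2 * Real.pi * I)) *
            ∮ s in C(0, ρ), (∑' n : ℕ, a n * s ^ n) * (∑' n : ℕ, b n * (z / s) ^ n) / s) :=
  hadamard_product_general a b r₁ r₂ hr₂ ha hb
end

section
/- Let t ∈ ℂ with 0 < |Re(t)| < 1/2, t ≠ 0. The power series G(ξ,t) = -(1/4π²)·∑_{g=2}^∞ (B_{2g}/(2g·(2g-2)!·(2g-3)!))·ξ^{2g-3}·∂_t^{2g} Li₃(e^{2πit}) has radius of convergence at least 2π|t| in ξ. -/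
/-!
The series is a Hadamard product. Euler's formula `ζ(2m) = (-1)^(m+1) (2π)^(2m) B_{2m} / (2 (2m)!)`
with `ζ(2m) ≤ ζ(2)` bounds `|B_{2m}| (2π)^(2m) / (2m)!` by `4`. On the other side,
`Li_{-n}(e^w)` is the `n`-th derivative of `e^w / (1 - e^w)`, whose poles are `2πiℤ`; when
`|Re t| ≤ 1/2` the nearest of them to `2πit` is `0`, at distance `2π|t|`, so Cauchy's estimates
give `|Li_{-n}(e^{2πit})| ≤ C n! / r^n` for every `r < 2π|t|`. Combining the two, the `g`-th term
is at most `(C / π²) (2g + 3) (|ξ| / r)^(2g + 1)`.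
-/

open Complex

/-- The polylogarithm of negative integer order: `negLi n z = Li_{-n}(z)`,
defined by `Li₀(z) = z/(1-z)` and `Li_{-(n+1)}(z) = z·(d/dz)Li_{-n}(z)`. -/
noncomputable def negLi : ℕ → ℂ → ℂ
  | 0 => fun z => z / (1 - z)
  | n + 1 => fun z => z * deriv (negLi n) z

open Metric
open scoped Real Nat

theorem exists_norm_iteratedDeriv_le_of_differentiableOn_ball {E : Type*} [NormedAddCommGroup E]
    [NormedSpace ℂ E] [CompleteSpace E] {f : ℂ → E} {c : ℂ} {R r : ℝ}
    (hf : DifferentiableOn ℂ f (ball c R)) (hr : 0 < r) (hrR : r < R) :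
    ∃ C, ∀ n, ‖iteratedDeriv n f c‖ ≤ n ! * C / r ^ n := by
  have hcl : DiffContOnCl ℂ f (ball c r) := hf.diffContOnCl_ball (closedBall_subset_ball hrR)
  obtain ⟨C, hC⟩ := (isCompact_sphere c r).exists_bound_of_continuousOn
    (hcl.continuousOn.mono (by rw [closure_ball c hr.ne']; exact sphere_subset_closedBall))
  exact ⟨C, fun n => norm_iteratedDeriv_le_of_forall_mem_sphere_norm_le n hr hcl hC⟩

theorem norm_le_norm_sub_intCast {t : ℂ} (ht : |t.re| ≤ 1 / 2) (k : ℤ) : ‖t‖ ≤ ‖t - k‖ := by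
  have hk : |(k : ℝ)| ≤ (k : ℝ) ^ 2 := by
    rcases eq_or_ne k 0 with rfl | hk0
    · simp
    · have : (1 : ℝ) ≤ |(k : ℝ)| := by exact_mod_cast Int.one_le_abs hk0
      nlinarith [sq_abs (k : ℝ)]
  have hkt : |(k : ℝ) * t.re| ≤ |(k : ℝ)| / 2 := by
    rw [abs_mul]; nlinarith [abs_nonneg (k : ℝ)]
  have hsq : ‖t‖ ^ 2 ≤ ‖t - k‖ ^ 2 := by
    simp only [Complex.sq_norm, Complex.normSq_apply, sub_re, sub_im, intCast_re, intCast_im]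
    nlinarith [le_abs_self ((k : ℝ) * t.re)]
  exact pow_le_pow_iff_left₀ (norm_nonneg _) (norm_nonneg _) two_ne_zero |>.mp hsq

theorem exp_ne_one_of_mem_ball {t w : ℂ} (ht : |t.re| ≤ 1 / 2)
    (hw : w ∈ ball (2 * π * I * t) (2 * π * ‖t‖)) : exp w ≠ 1 := by
  intro hexp
  obtain ⟨k, rfl⟩ := exp_eq_one_iff.mp hexp
  have hnorm : ‖2 * π * I‖ = 2 * π := by simp [abs_of_pos Real.pi_pos]
  rw [mem_ball, dist_eq, show k * (2 * π * I) - 2 * π * I * t = 2 * π * I * -(t - k) by ring,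
    norm_mul, norm_neg, hnorm] at hw
  exact (mul_lt_mul_iff_right₀ Real.two_pi_pos).mp hw |>.not_ge (norm_le_norm_sub_intCast ht k)

theorem analyticOnNhd_negLi (n : ℕ) : AnalyticOnNhd ℂ (negLi n) {z | z ≠ 1} := by
  induction n with
  | zero =>
    exact analyticOnNhd_id.div (analyticOnNhd_const.sub analyticOnNhd_id)
      fun z hz => sub_ne_zero.2 (Ne.symm hz)
  | succ n ih => exact analyticOnNhd_id.mul ih.deriv

theorem iteratedDeriv_exp_div_one_sub_exp (n : ℕ) :
    ∀ w, exp w ≠ 1 → iteratedDeriv n (fun w => exp w / (1 - exp w)) w = negLi n (exp w) := by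
  induction n with
  | zero => intro w _; simp [negLi]
  | succ n ih =>
    intro w hw
    have hev : iteratedDeriv n (fun w => exp w / (1 - exp w)) =ᶠ[nhds w] (negLi n ∘ exp) :=
      Filter.eventuallyEq_of_mem ((isOpen_ne.preimage continuous_exp).mem_nhds hw) ih
    have hd : HasDerivAt (negLi n) (deriv (negLi n) (exp w)) (exp w) :=
      (analyticOnNhd_negLi n (exp w) hw).differentiableAt.hasDerivAt
    rw [iteratedDeriv_succ, hev.deriv_eq, (hd.comp w (hasDerivAt_exp w)).deriv, negLi, mul_comm]

theorem exists_norm_negLi_exp_le {t : ℂ} (ht : |t.re| ≤ 1 / 2) {r : ℝ} (hr : 0 < r)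
    (hrt : r < 2 * π * ‖t‖) :
    ∃ C, ∀ n, ‖negLi n (exp (2 * π * I * t))‖ ≤ n ! * C / r ^ n := by
  have hf : DifferentiableOn ℂ (fun w => exp w / (1 - exp w))
      (ball (2 * π * I * t) (2 * π * ‖t‖)) :=
    fun w hw => (differentiableAt_exp.div (differentiableAt_const _ |>.sub differentiableAt_exp)
      (sub_ne_zero.2 (exp_ne_one_of_mem_ball ht hw).symm)).differentiableWithinAt
  have hcenter : exp (2 * π * I * t) ≠ 1 :=
    exp_ne_one_of_mem_ball ht (mem_ball_self (hr.trans hrt))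
  obtain ⟨C, hC⟩ := exists_norm_iteratedDeriv_le_of_differentiableOn_ball hf hr hrt
  exact ⟨C, fun n => iteratedDeriv_exp_div_one_sub_exp n _ hcenter ▸ hC n⟩

theorem abs_bernoulli_mul_two_pi_pow_div_factorial_le {m : ℕ} (hm : m ≠ 0) :
    |(bernoulli (2 * m) : ℝ)| * (2 * π) ^ (2 * m) / (2 * m)! ≤ 4 := by
  have hs := hasSum_zeta_nat hm
  have hle : ∑' n : ℕ, 1 / (n : ℝ) ^ (2 * m) ≤ π ^ 2 / 6 := by
    rw [← hasSum_zeta_two.tsum_eq]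
    refine hs.summable.tsum_le_tsum (fun n => ?_) hasSum_zeta_two.summable
    rcases n.eq_zero_or_pos with rfl | hn
    · simp [hm]
    · gcongr
      · exact_mod_cast hn
      · omega
  have h2 : (2 : ℝ) ^ (2 * m) = 2 * 2 ^ (2 * m - 1) := by rw [← pow_succ']; congr 1; omega
  have hS : |(bernoulli (2 * m) : ℝ)| * (2 * π) ^ (2 * m) / (2 * m)!
      = 2 * |∑' n : ℕ, 1 / (n : ℝ) ^ (2 * m)| := by
    rw [hs.tsum_eq, mul_pow, h2]
    simp [abs_mul, abs_div, abs_of_pos Real.pi_pos]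
    ring
  rw [hS, abs_of_nonneg (tsum_nonneg fun n => by positivity)]
  nlinarith [Real.pi_lt_d2, Real.pi_pos]

theorem summable_odd_mul_pow {q : ℝ} (hq0 : 0 ≤ q) (hq1 : q < 1) :
    Summable fun g : ℕ => (2 * g + 3 : ℝ) * q ^ (2 * g + 1) := by
  have hq : ‖q‖ < 1 := by rwa [Real.norm_of_nonneg hq0]
  have h : Summable fun n : ℕ => ((n : ℝ) + 2) * q ^ n := by
    simpa [add_mul] using (summable_pow_mul_geometric_of_norm_lt_one 1 hq).add
      ((summable_geometric_of_lt_one hq0 hq1).mul_left 2)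
  have hodd : Function.Injective fun g : ℕ => 2 * g + 1 := fun a b h => by simp only at h; omega
  refine (h.comp_injective hodd).congr fun g => ?_
  simp only [Function.comp_apply]
  push_cast; ring

/-- The `g`-th term of the series, with `L` in place of `Li_{-(2g+1)}(e^{2πit})`. -/
noncomputable def borelTerm (ξ L : ℂ) (g : ℕ) : ℂ :=
  -(1 / (4 * (π : ℂ) ^ 2)) *
    ((bernoulli (2 * (g + 2)) : ℂ)
      / ((2 * (g + 2) : ℕ) * ((2 * (g + 2) - 2).factorial : ℂ)
          * ((2 * (g + 2) - 3).factorial : ℂ)))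
    * ξ ^ (2 * (g + 2) - 3) * (2 * π * I) ^ (2 * (g + 2)) * L

theorem norm_borelTerm_eq (g : ℕ) (ξ L : ℂ) :
    ‖borelTerm ξ L g‖
      = 1 / (4 * π ^ 2)
        * (|(bernoulli (2 * (g + 2)) : ℝ)| * (2 * π) ^ (2 * (g + 2)) / (2 * (g + 2))!)
        * (2 * g + 3) * (‖ξ‖ ^ (2 * g + 1) * ‖L‖ / (2 * g + 1)!) := by
  have hfact : (2 * (g + 2))! = 2 * (g + 2) * ((2 * g + 3) * (2 * g + 2)!) := by
    rw [show 2 * (g + 2) = 2 * g + 3 + 1 by ring, Nat.factorial_succ, Nat.factorial_succ]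
  have hB : ‖(bernoulli (2 * (g + 2)) : ℂ)‖ = |(bernoulli (2 * (g + 2)) : ℝ)| := by
    rw [← Complex.ofReal_ratCast, Complex.norm_real, Real.norm_eq_abs]
  rw [borelTerm, show 2 * (g + 2) - 3 = 2 * g + 1 by omega,
    show 2 * (g + 2) - 2 = 2 * g + 2 by omega]
  simp only [norm_neg, norm_mul, norm_div, norm_pow, norm_one, hB, Complex.norm_natCast,
    Complex.norm_ofNat, Complex.norm_I, Complex.norm_real, Real.norm_eq_abs,
    abs_of_pos Real.pi_pos, mul_one, hfact]
  push_cast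
  field_simp

theorem norm_borelTerm_le (g : ℕ) (ξ L : ℂ) {C r : ℝ}
    (hL : ‖L‖ ≤ (2 * g + 1)! * C / r ^ (2 * g + 1)) :
    ‖borelTerm ξ L g‖ ≤ C / π ^ 2 * ((2 * g + 3) * (‖ξ‖ / r) ^ (2 * g + 1)) := by
  have hL' : ‖ξ‖ ^ (2 * g + 1) * ‖L‖ / (2 * g + 1)! ≤ C * (‖ξ‖ / r) ^ (2 * g + 1) := by
    rw [div_le_iff₀ (by positivity), div_pow]
    calc ‖ξ‖ ^ (2 * g + 1) * ‖L‖
        ≤ ‖ξ‖ ^ (2 * g + 1) * ((2 * g + 1)! * C / r ^ (2 * g + 1)) := by gcongr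
      _ = C * (‖ξ‖ ^ (2 * g + 1) / r ^ (2 * g + 1)) * (2 * g + 1)! := by ring
  calc _ = 1 / (4 * π ^ 2)
        * (|(bernoulli (2 * (g + 2)) : ℝ)| * (2 * π) ^ (2 * (g + 2)) / (2 * (g + 2))!)
        * (2 * g + 3) * (‖ξ‖ ^ (2 * g + 1) * ‖L‖ / (2 * g + 1)!) := norm_borelTerm_eq g ξ L
    _ ≤ 1 / (4 * π ^ 2) * 4 * (2 * g + 3) * (C * (‖ξ‖ / r) ^ (2 * g + 1)) := by
        gcongr
        exact abs_bernoulli_mul_two_pi_pow_div_factorial_le (by omega)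
    _ = C / π ^ 2 * ((2 * g + 3) * (‖ξ‖ / r) ^ (2 * g + 1)) := by field_simp

theorem borel_transform_radius_general (t : ℂ)
    (htre' : |t.re| < 1 / 2) :
    ∀ ξ : ℂ, ‖ξ‖ < 2 * Real.pi * ‖t‖ →
      Summable (fun g : ℕ =>
        -(1 / (4 * (Real.pi : ℂ) ^ 2)) *
          ((bernoulli (2 * (g + 2)) : ℂ)
            / ((2 * (g + 2) : ℕ) * ((2 * (g + 2) - 2).factorial : ℂ)
                * ((2 * (g + 2) - 3).factorial : ℂ)))
          * ξ ^ (2 * (g + 2) - 3)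
          * (2 * Real.pi * I) ^ (2 * (g + 2))
          * negLi (2 * (g + 2) - 3) (exp (2 * Real.pi * I * t))) := by
  intro ξ hξ
  obtain ⟨r, hξr, hrt⟩ := exists_between hξ
  have hr : 0 < r := (norm_nonneg ξ).trans_lt hξr
  obtain ⟨C, hC⟩ := exists_norm_negLi_exp_le htre'.le hr hrt
  have hq : Summable fun g : ℕ => (2 * g + 3 : ℝ) * (‖ξ‖ / r) ^ (2 * g + 1) :=
    summable_odd_mul_pow (by positivity) ((div_lt_one hr).2 hξr)
  refine Summable.of_norm_bounded (f := fun g => borelTerm ξ (negLi (2 * (g + 2) - 3) _) g)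
    (hq.mul_left (C / π ^ 2)) fun g => ?_
  exact norm_borelTerm_le g ξ _ (show 2 * (g + 2) - 3 = 2 * g + 1 by omega ▸ hC _)

/-- For `t ≠ 0` with `0 < |Re(t)| < 1/2`, the Borel transform
`G(ξ,t) = -(1/4π²)·∑_{g≥2} (B_{2g}/(2g·(2g-2)!·(2g-3)!))·ξ^{2g-3}·∂_t^{2g}Li₃(e^{2πit})`,
with `∂_t^{2g}Li₃(e^{2πit}) = (2πi)^{2g}·Li_{3-2g}(e^{2πit})`, has radius of convergence
at least `2π|t|` in `ξ`, i.e. the series is summable for all `|ξ| < 2π|t|`. -/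
theorem borel_transform_radius (t : ℂ) (ht0 : t ≠ 0)
    (htre : 0 < |t.re|) (htre' : |t.re| < 1 / 2) :
    ∀ ξ : ℂ, ‖ξ‖ < 2 * Real.pi * ‖t‖ →
      Summable (fun g : ℕ =>
        -(1 / (4 * (Real.pi : ℂ) ^ 2)) *
          ((bernoulli (2 * (g + 2)) : ℂ)
            / ((2 * (g + 2) : ℕ) * ((2 * (g + 2) - 2).factorial : ℂ)
                * ((2 * (g + 2) - 3).factorial : ℂ)))
          * ξ ^ (2 * (g + 2) - 3)
          * (2 * Real.pi * I) ^ (2 * (g + 2))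
          * negLi (2 * (g + 2) - 3) (exp (2 * Real.pi * I * t))) :=
  borel_transform_radius_general t htre'
end

section
/- Let t, λ̌ ∈ ℂ with Im(t) > 0, Re(λ̌) > 0, and suppose w = e^{2πit/λ̌} and q̃ = e^{2πi/λ̌} satisfy |w| < 1, |q̃| < 1. Then ∑_{k=0}^∞ ( Li₂(w·q̃^k) + log(w·q̃^k)·log(1 - w·q̃^k) ) = ∑_{l=1}^∞ (w^l/(l·(1-q̃^l)))·( 1/l - q̃^l·log(q̃)/(1-q̃^l) - log w ) = -∑_{l=1}^∞ ∂/∂l ( w^l/(l(1-q̃^l)) ), where log w = 2πit/λ̌ and log q̃ = 2πi/λ̌. -/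
/-!
Expanding `Li₂(w q^k) + log(w q^k) log(1 - w q^k)` in powers of `z = w q^k` (the series of `Li₂`
and of `-log(1 - z)`) turns the left-hand side into a double series over `(k, n)`, absolutely
convergent because `‖(w q^k)^(n+1)‖ ≤ ‖q‖^k ‖w‖^(n+1)`. Summing it over `k` first leaves, for
each `n`, a geometric series in `q^(n+1)` and its derivative, whose closed form is the `n`-th term
of the middle expression. The second identity is the quotient rule: the bracket is minus the
logarithmic derivative of `x ↦ e^(x log w) / (x (1 - e^(x log q)))` at `x = n + 1`.
-/

open Complex

/-- The dilogarithm `Li₂(z) = ∑_{n≥1} z^n/n²`. -/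
noncomputable def Li2 (z : ℂ) : ℂ := ∑' n : ℕ, z ^ (n + 1) / ((n : ℂ) + 1) ^ 2

lemma one_le_norm_natCast_add_one (n : ℕ) : 1 ≤ ‖(n : ℂ) + 1‖ := by
  rw [← Nat.cast_add_one, Complex.norm_natCast]
  exact_mod_cast n.succ_pos

lemma hasSum_Li2 {z : ℂ} (hz : ‖z‖ < 1) :
    HasSum (fun n : ℕ => z ^ (n + 1) / ((n : ℂ) + 1) ^ 2) (Li2 z) := by
  refine (Summable.of_norm_bounded (g := fun n : ℕ => ‖z‖ ^ (n + 1)) ?_ fun n => ?_).hasSum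
  · exact (summable_nat_add_iff 1).mpr (summable_geometric_of_lt_one (norm_nonneg z) hz)
  · rw [norm_div, norm_pow, norm_pow]
    exact div_le_self (by positivity) (one_le_pow₀ (one_le_norm_natCast_add_one n))

lemma hasSum_Li2_add_mul_log {z : ℂ} (hz : ‖z‖ < 1) (c : ℂ) :
    HasSum (fun n : ℕ => z ^ (n + 1) * (1 / ((n : ℂ) + 1) ^ 2 - c / ((n : ℂ) + 1)))
      (Li2 z + c * log (1 - z)) := by
  convert (hasSum_Li2 hz).add ((hasSum_taylorSeries_neg_log' hz).mul_left (-c)) using 1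
  · ext n
    ring
  · ring

lemma hasSum_geometric_mul_affine {𝕜 : Type*} [NormedField 𝕜] [CompleteSpace 𝕜] {x : 𝕜}
    (hx : ‖x‖ < 1) (u v : 𝕜) :
    HasSum (fun k : ℕ => x ^ k * (u + k * v)) (u / (1 - x) + v * x / (1 - x) ^ 2) := by
  have h : HasSum (fun k : ℕ => x ^ k * (u + k * v)) (u * (1 - x)⁻¹ + v * (x / (1 - x) ^ 2)) :=
    (((hasSum_geometric_of_norm_lt_one hx).mul_left u).add
      ((hasSum_coe_mul_geometric_of_norm_lt_one hx).mul_left v)).congr_fun fun k => by ring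
  rwa [div_eq_mul_inv u, mul_div_assoc]

noncomputable def dilogLogTerm (w q a b : ℂ) (k n : ℕ) : ℂ :=
  (w * q ^ k) ^ (n + 1) * (1 / ((n : ℂ) + 1) ^ 2 - (a + k * b) / ((n : ℂ) + 1))

section

variable {w q : ℂ} (a b : ℂ)

lemma norm_dilogLogTerm_le (hq : ‖q‖ < 1) (k n : ℕ) :
    ‖dilogLogTerm w q a b k n‖ ≤ ‖q‖ ^ k * (1 + ‖a‖ + k * ‖b‖) * ‖w‖ ^ (n + 1) := by
  have hn := one_le_norm_natCast_add_one n
  have hpow : ‖(w * q ^ k) ^ (n + 1)‖ ≤ ‖q‖ ^ k * ‖w‖ ^ (n + 1) := by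
    rw [norm_pow, norm_mul, norm_pow, mul_pow, ← pow_mul, mul_comm (‖q‖ ^ k)]
    exact mul_le_mul_of_nonneg_left
      (pow_le_pow_of_le_one (norm_nonneg q) hq.le (Nat.le_mul_of_pos_right k n.succ_pos))
      (by positivity)
  have hcoef : ‖1 / ((n : ℂ) + 1) ^ 2 - (a + k * b) / ((n : ℂ) + 1)‖ ≤ 1 + ‖a‖ + k * ‖b‖ :=
    calc _ ≤ ‖1 / ((n : ℂ) + 1) ^ 2‖ + ‖(a + k * b) / ((n : ℂ) + 1)‖ := norm_sub_le _ _
      _ ≤ 1 + ‖a + k * b‖ := by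
        rw [norm_div, norm_div, norm_one, norm_pow]
        gcongr
        · exact div_le_one_of_le₀ (one_le_pow₀ hn) (by positivity)
        · exact div_le_self (norm_nonneg _) hn
      _ ≤ 1 + ‖a‖ + k * ‖b‖ := by
        grw [add_assoc, norm_add_le, norm_mul, Complex.norm_natCast]
  calc ‖dilogLogTerm w q a b k n‖
      = ‖(w * q ^ k) ^ (n + 1)‖ * ‖1 / ((n : ℂ) + 1) ^ 2 - (a + k * b) / ((n : ℂ) + 1)‖ :=
        norm_mul _ _
    _ ≤ ‖q‖ ^ k * ‖w‖ ^ (n + 1) * (1 + ‖a‖ + k * ‖b‖) :=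
        mul_le_mul hpow hcoef (norm_nonneg _) (by positivity)
    _ = ‖q‖ ^ k * (1 + ‖a‖ + k * ‖b‖) * ‖w‖ ^ (n + 1) := by ring

lemma summable_dilogLogTerm (hw : ‖w‖ < 1) (hq : ‖q‖ < 1) :
    Summable fun p : ℕ × ℕ => dilogLogTerm w q a b p.1 p.2 := by
  have hq' : ‖‖q‖‖ < 1 := by rwa [norm_norm]
  have hk : Summable fun k : ℕ => ‖q‖ ^ k * (1 + ‖a‖ + k * ‖b‖) :=
    (hasSum_geometric_mul_affine hq' (1 + ‖a‖) ‖b‖).summable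
  have hn : Summable fun n : ℕ => ‖w‖ ^ (n + 1) :=
    (summable_nat_add_iff 1).mpr (summable_geometric_of_lt_one (norm_nonneg w) hw)
  exact .of_norm_bounded (hk.mul_of_nonneg hn (fun k => by positivity) fun n => by positivity)
    fun p => norm_dilogLogTerm_le a b hq p.1 p.2

lemma hasSum_dilogLogTerm_left (hw : ‖w‖ < 1) (hq : ‖q‖ < 1) (k : ℕ) :
    HasSum (fun n => dilogLogTerm w q a b k n)
      (Li2 (w * q ^ k) + (a + k * b) * log (1 - w * q ^ k)) := by
  refine hasSum_Li2_add_mul_log ?_ _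
  rw [norm_mul, norm_pow]
  exact mul_lt_one_of_nonneg_of_lt_one_left (norm_nonneg w) hw
    (pow_le_one₀ (norm_nonneg q) hq.le)

lemma hasSum_dilogLogTerm_right (hq : ‖q‖ < 1) (n : ℕ) :
    HasSum (fun k => dilogLogTerm w q a b k n)
      (w ^ (n + 1) / (((n : ℂ) + 1) * (1 - q ^ (n + 1)))
        * (1 / ((n : ℂ) + 1) - q ^ (n + 1) * b / (1 - q ^ (n + 1)) - a)) := by
  have hQ : ‖q ^ (n + 1)‖ < 1 := by
    rw [norm_pow]
    exact pow_lt_one₀ (norm_nonneg q) hq n.succ_ne_zero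
  have hQ1 := (isUnit_one_sub_of_norm_lt_one hQ).ne_zero
  have hn : (n : ℂ) + 1 ≠ 0 := Nat.cast_add_one_ne_zero n
  have h := (hasSum_geometric_mul_affine hQ (1 / ((n : ℂ) + 1) ^ 2 - a / ((n : ℂ) + 1))
    (-b / ((n : ℂ) + 1))).mul_left (w ^ (n + 1))
  have hval : w ^ (n + 1) / (((n : ℂ) + 1) * (1 - q ^ (n + 1)))
        * (1 / ((n : ℂ) + 1) - q ^ (n + 1) * b / (1 - q ^ (n + 1)) - a)
      = w ^ (n + 1) * ((1 / ((n : ℂ) + 1) ^ 2 - a / ((n : ℂ) + 1)) / (1 - q ^ (n + 1))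
          + -b / ((n : ℂ) + 1) * q ^ (n + 1) / (1 - q ^ (n + 1)) ^ 2) := by
    field_simp
    ring
  rw [hval]
  refine h.congr_fun fun k => ?_
  rw [dilogLogTerm, mul_pow, ← pow_mul, ← pow_mul, mul_comm k]
  ring

lemma tsum_Li2_add_mul_log_eq (hw : ‖w‖ < 1) (hq : ‖q‖ < 1) :
    ∑' k : ℕ, (Li2 (w * q ^ k) + (a + k * b) * log (1 - w * q ^ k))
      = ∑' n : ℕ, w ^ (n + 1) / (((n : ℂ) + 1) * (1 - q ^ (n + 1)))
          * (1 / ((n : ℂ) + 1) - q ^ (n + 1) * b / (1 - q ^ (n + 1)) - a) := by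
  have hF := summable_dilogLogTerm a b hw hq
  have hrows := hF.hasSum.prod_fiberwise (hasSum_dilogLogTerm_left a b hw hq)
  have hcols := hF.prod_symm.hasSum.prod_fiberwise (hasSum_dilogLogTerm_right a b hq)
  rw [hrows.tsum_eq, hcols.tsum_eq]
  exact ((Equiv.prodComm ℕ ℕ).tsum_eq _).symm

end

lemma hasDerivAt_exp_div_mul_one_sub_exp (a b : ℂ) {x : ℝ} (hx : x ≠ 0)
    (hb : exp (x * b) ≠ 1) :
    HasDerivAt (fun y : ℝ => exp (y * a) / (y * (1 - exp (y * b))))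
      (-(exp (x * a) / (x * (1 - exp (x * b)))
        * (1 / x - exp (x * b) * b / (1 - exp (x * b)) - a))) x := by
  have hx' : (x : ℂ) ≠ 0 := ofReal_ne_zero.mpr hx
  have hb' : 1 - exp (x * b) ≠ 0 := sub_ne_zero.mpr hb.symm
  have hnum : HasDerivAt (fun y : ℂ => exp (y * a)) (exp (x * a) * a) x := by
    simpa using ((hasDerivAt_id (x : ℂ)).mul_const a).cexp
  have hden : HasDerivAt (fun y : ℂ => y * (1 - exp (y * b)))
      (1 * (1 - exp (x * b)) + x * -(exp (x * b) * (1 * b))) x :=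
    (hasDerivAt_id _).mul (((hasDerivAt_id _).mul_const b).cexp.const_sub 1)
  exact (hnum.div hden (mul_ne_zero hx' hb')).comp_ofReal.congr_deriv (by field_simp; ring)

lemma neg_deriv_exp_div_mul_one_sub_exp_natCast_add_one (a b : ℂ) (hb : ‖exp b‖ < 1) (n : ℕ) :
    -deriv (fun y : ℝ => exp (y * a) / (y * (1 - exp (y * b)))) ((n : ℝ) + 1)
      = exp a ^ (n + 1) / (((n : ℂ) + 1) * (1 - exp b ^ (n + 1)))
          * (1 / ((n : ℂ) + 1) - exp b ^ (n + 1) * b / (1 - exp b ^ (n + 1)) - a) := by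
  have hpow (c : ℂ) : exp ((((n : ℝ) + 1 : ℝ) : ℂ) * c) = exp c ^ (n + 1) := by
    rw [← exp_nat_mul]
    push_cast
    rfl
  have hQ : ‖exp b ^ (n + 1)‖ < 1 := by
    rw [norm_pow]
    exact pow_lt_one₀ (norm_nonneg _) hb n.succ_ne_zero
  have hb1 : exp ((((n : ℝ) + 1 : ℝ) : ℂ) * b) ≠ 1 := by
    rw [hpow]
    exact fun h => by simp [h] at hQ
  rw [(hasDerivAt_exp_div_mul_one_sub_exp a b (by positivity) hb1).deriv, neg_neg, hpow, hpow]
  push_cast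
  rfl

theorem sum_of_stokes_jumps_general (t lm : ℂ)
    (hw : ‖exp (2 * Real.pi * I * t / lm)‖ < 1)
    (hq : ‖exp (2 * Real.pi * I / lm)‖ < 1) :
    (∑' k : ℕ, (Li2 (exp (2 * Real.pi * I * t / lm) * exp (2 * Real.pi * I / lm) ^ k)
        + (2 * Real.pi * I * t / lm + (k : ℂ) * (2 * Real.pi * I / lm))
          * Complex.log (1 - exp (2 * Real.pi * I * t / lm) * exp (2 * Real.pi * I / lm) ^ k))
      = ∑' l : ℕ, (exp (2 * Real.pi * I * t / lm) ^ (l + 1)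
            / (((l : ℂ) + 1) * (1 - exp (2 * Real.pi * I / lm) ^ (l + 1))))
          * (1 / ((l : ℂ) + 1)
              - exp (2 * Real.pi * I / lm) ^ (l + 1) * (2 * Real.pi * I / lm)
                  / (1 - exp (2 * Real.pi * I / lm) ^ (l + 1))
              - 2 * Real.pi * I * t / lm))
    ∧ (∑' l : ℕ, (exp (2 * Real.pi * I * t / lm) ^ (l + 1)
            / (((l : ℂ) + 1) * (1 - exp (2 * Real.pi * I / lm) ^ (l + 1))))
          * (1 / ((l : ℂ) + 1)
              - exp (2 * Real.pi * I / lm) ^ (l + 1) * (2 * Real.pi * I / lm)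
                  / (1 - exp (2 * Real.pi * I / lm) ^ (l + 1))
              - 2 * Real.pi * I * t / lm)
      = -∑' l : ℕ, deriv (fun x : ℝ =>
            exp ((x : ℂ) * (2 * Real.pi * I * t / lm))
              / ((x : ℂ) * (1 - exp ((x : ℂ) * (2 * Real.pi * I / lm))))) ((l : ℝ) + 1)) := by
  refine ⟨tsum_Li2_add_mul_log_eq _ _ hw hq, ?_⟩
  rw [← tsum_neg]
  exact tsum_congr fun l => (neg_deriv_exp_div_mul_one_sub_exp_natCast_add_one _ _ hq l).symm

/-- With `w = e^{2πit/λ̌}`, `q̃ = e^{2πi/λ̌}`, `log w = 2πit/λ̌`, `log q̃ = 2πi/λ̌`, assuming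
`Im(t) > 0`, `Re(λ̌) > 0`, `|w| < 1`, `|q̃| < 1`:
`∑_{k=0}^∞ ( Li₂(w·q̃^k) + log(w·q̃^k)·log(1 - w·q̃^k) )
  = ∑_{l=1}^∞ (w^l/(l·(1-q̃^l)))·( 1/l - q̃^l·log(q̃)/(1-q̃^l) - log w )
  = -∑_{l=1}^∞ ∂/∂l ( w^l/(l(1-q̃^l)) )`,
where `∂/∂l` differentiates `l ↦ e^{l·log w}/(l·(1-e^{l·log q̃}))` in the real variable `l`. -/
theorem sum_of_stokes_jumps (t lm : ℂ) (ht : 0 < t.im) (hlm : 0 < lm.re)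
    (hw : ‖exp (2 * Real.pi * I * t / lm)‖ < 1)
    (hq : ‖exp (2 * Real.pi * I / lm)‖ < 1) :
    (∑' k : ℕ, (Li2 (exp (2 * Real.pi * I * t / lm) * exp (2 * Real.pi * I / lm) ^ k)
        + (2 * Real.pi * I * t / lm + (k : ℂ) * (2 * Real.pi * I / lm))
          * Complex.log (1 - exp (2 * Real.pi * I * t / lm) * exp (2 * Real.pi * I / lm) ^ k))
      = ∑' l : ℕ, (exp (2 * Real.pi * I * t / lm) ^ (l + 1)
            / (((l : ℂ) + 1) * (1 - exp (2 * Real.pi * I / lm) ^ (l + 1))))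
          * (1 / ((l : ℂ) + 1)
              - exp (2 * Real.pi * I / lm) ^ (l + 1) * (2 * Real.pi * I / lm)
                  / (1 - exp (2 * Real.pi * I / lm) ^ (l + 1))
              - 2 * Real.pi * I * t / lm))
    ∧ (∑' l : ℕ, (exp (2 * Real.pi * I * t / lm) ^ (l + 1)
            / (((l : ℂ) + 1) * (1 - exp (2 * Real.pi * I / lm) ^ (l + 1))))
          * (1 / ((l : ℂ) + 1)
              - exp (2 * Real.pi * I / lm) ^ (l + 1) * (2 * Real.pi * I / lm)
                  / (1 - exp (2 * Real.pi * I / lm) ^ (l + 1))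
              - 2 * Real.pi * I * t / lm)
      = -∑' l : ℕ, deriv (fun x : ℝ =>
            exp ((x : ℂ) * (2 * Real.pi * I * t / lm))
              / ((x : ℂ) * (1 - exp ((x : ℂ) * (2 * Real.pi * I / lm))))) ((l : ℝ) + 1)) :=
  sum_of_stokes_jumps_general t lm hw hq
end
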